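/- Let X be a Banach space, e ∈ B_X, e* ∈ S_{X*} with e*(e) = ‖e‖ = ‖e*‖ = 1, and define P x = e*(x)e, R = I − P. If the norm of X is strictly convex, then sup{‖Py − Ry‖ : ‖y‖ ≤ 1, P(e − y) = 0} = 1. -/

import Mathlib

/-! The set in question is `{1}`: the condition `P(e − y) = 0` says `e*(y) = 1`, and in a strictly
convex space the face `{e* = 1}` of the unit ball, which contains `e`, is the single point `e`;
for `y = e` one has `‖Py − Ry‖ = ‖e‖ = 1`. -/

section

variable {E : Type*} [NormedAddCommGroup E] [NormedSpace ℝ E]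

theorem StrictConvexSpace.of_norm_midpoint_lt_one
    (h : ∀ u v : E, ‖u‖ = 1 → ‖v‖ = 1 → u ≠ v → ‖(1 / 2 : ℝ) • (u + v)‖ < 1) :
    StrictConvexSpace ℝ E :=
  StrictConvexSpace.of_norm_combo_lt_one fun u v hu hv huv =>
    ⟨1 / 2, 1 / 2, add_halves 1, by simpa only [smul_add] using h u v hu hv huv⟩

theorem ContinuousLinearMap.norm_eq_one_of_apply_eq_one {f : E →L[ℝ] ℝ} (hf : ‖f‖ ≤ 1)
    {x : E} (hx : ‖x‖ ≤ 1) (hfx : f x = 1) : ‖x‖ = 1 :=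
  le_antisymm hx <| calc
    (1 : ℝ) = f x := hfx.symm
    _ ≤ ‖f x‖ := le_abs_self _
    _ ≤ ‖f‖ * ‖x‖ := f.le_opNorm x
    _ ≤ ‖x‖ := mul_le_of_le_one_left (norm_nonneg x) hf

theorem ContinuousLinearMap.eq_of_apply_eq_one [StrictConvexSpace ℝ E] {f : E →L[ℝ] ℝ}
    (hf : ‖f‖ ≤ 1) {x y : E} (hx : ‖x‖ ≤ 1) (hy : ‖y‖ ≤ 1) (hfx : f x = 1) (hfy : f y = 1) :
    x = y := by
  have hx1 := f.norm_eq_one_of_apply_eq_one hf hx hfx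
  have hy1 := f.norm_eq_one_of_apply_eq_one hf hy hfy
  refine eq_of_norm_eq_of_norm_add_eq (hx1.trans hy1.symm) (le_antisymm (norm_add_le x y) ?_)
  calc ‖x‖ + ‖y‖ = f (x + y) := by rw [map_add, hfx, hfy, hx1, hy1]
    _ ≤ ‖f (x + y)‖ := le_abs_self _
    _ ≤ ‖f‖ * ‖x + y‖ := f.le_opNorm _
    _ ≤ ‖x + y‖ := mul_le_of_le_one_left (norm_nonneg _) hf

end

theorem stmt10 {X : Type*} [NormedAddCommGroup X] [NormedSpace ℝ X]
    (e : X) (f : X →L[ℝ] ℝ) (he : ‖e‖ = 1) (hf : ‖f‖ = 1) (hfe : f e = 1)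
    (hsc : ∀ u v : X, ‖u‖ = 1 → ‖v‖ = 1 → u ≠ v → ‖(1/2 : ℝ) • (u + v)‖ < 1) :
    sSup {r : ℝ | ∃ y : X, ‖y‖ ≤ 1 ∧ f (e - y) • e = 0 ∧
      r = ‖f y • e - (y - f y • e)‖} = 1 := by
  have := StrictConvexSpace.of_norm_midpoint_lt_one hsc
  have he0 : e ≠ 0 := norm_ne_zero_iff.mp (by rw [he]; exact one_ne_zero)
  suffices hset : {r : ℝ | ∃ y : X, ‖y‖ ≤ 1 ∧ f (e - y) • e = 0 ∧
      r = ‖f y • e - (y - f y • e)‖} = {1} by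
    rw [hset, csSup_singleton]
  ext r
  simp only [Set.mem_ofPred_eq, Set.mem_singleton_iff]
  constructor
  · rintro ⟨y, hy, hPy, rfl⟩
    have hfy : f y = 1 := by
      rw [smul_eq_zero_iff_left he0, map_sub, hfe, sub_eq_zero] at hPy
      exact hPy.symm
    obtain rfl : y = e := f.eq_of_apply_eq_one hf.le hy he.le hfy hfe
    simp [hfe, he]
  · rintro rfl
    exact ⟨e, he.le, by simp, by simp [hfe, he]⟩
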